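/- arXiv:2502.21262 — 2 statements merged into one kernel-verified Lean document; each statement's English description precedes it below -/
import Mathlib

section
/- Let M = (F, Λ, E, V) and M̂ = (F̂, Λ̂, Ê, V̂) be belief models such that M̂ covers M, M̂ is complete (ker(Ê) ∩ V̂ ⊆ ker(Λ̂) ∩ V̂), and let R ∈ V with G = Λ(R), G_O = E(R). Then every R̂ ∈ V̂ with Ê(R̂) = G_O satisfies Λ̂(R̂) = G; in particular {Λ̂(R̂) : R̂ ∈ V̂, Ê(R̂) = G_O} = {G}. -/
theorem LinearMap.apply_eq_of_ker_inf_le {R M N P : Type*} [Ring R] [AddCommGroup M]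
    [AddCommGroup N] [AddCommGroup P] [Module R M] [Module R N] [Module R P]
    (f : M →ₗ[R] N) (g : M →ₗ[R] P) {V : Submodule R M}
    (h : LinearMap.ker f ⊓ V ≤ LinearMap.ker g) {x y : M} (hx : x ∈ V) (hy : y ∈ V)
    (hxy : f x = f y) : g x = g y := by
  have hdiff : x - y ∈ LinearMap.ker f ⊓ V :=
    ⟨show f (x - y) = 0 by rw [map_sub, hxy, sub_self], sub_mem hx hy⟩
  rw [← sub_eq_zero, ← map_sub]
  exact h hdiff

theorem stmt9_general {F Fh T O : Type*}
    (Λ : (F → ℝ) →ₗ[ℝ] (T → ℝ)) (E : (F → ℝ) →ₗ[ℝ] (O → ℝ))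
    (V : Submodule ℝ (F → ℝ))
    (Λh : (Fh → ℝ) →ₗ[ℝ] (T → ℝ)) (Eh : (Fh → ℝ) →ₗ[ℝ] (O → ℝ))
    (Vh : Submodule ℝ (Fh → ℝ))
    (hcover : ∀ v ∈ V, ∃ vh ∈ Vh, Λh vh = Λ v ∧ Eh vh = E v)
    (hcomplete : LinearMap.ker Eh ⊓ Vh ≤ LinearMap.ker Λh ⊓ Vh)
    (R : F → ℝ) (hR : R ∈ V) (G : T → ℝ) (GO : O → ℝ)
    (hG : Λ R = G) (hGO : E R = GO) :
    (∀ Rh ∈ Vh, Eh Rh = GO → Λh Rh = G) ∧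
    {g : T → ℝ | ∃ Rh ∈ Vh, Eh Rh = GO ∧ g = Λh Rh} = {G} := by
  obtain ⟨Rcov, hRcovV, hRcovΛ, hRcovE⟩ := hcover R hR
  have unique : ∀ Rh ∈ Vh, Eh Rh = GO → Λh Rh = G := fun Rh hRh hRhE => by
    rw [← hG, ← hRcovΛ]
    exact Eh.apply_eq_of_ker_inf_le Λh (hcomplete.trans inf_le_left) hRh hRcovV
      (by rw [hRhE, hRcovE, hGO])
  refine ⟨unique, Set.eq_singleton_iff_unique_mem.mpr ⟨?_, ?_⟩⟩
  · exact ⟨Rcov, hRcovV, hRcovE.trans hGO, by rw [hRcovΛ, hG]⟩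
  · rintro g ⟨Rh, hRh, hRhE, rfl⟩
    exact unique Rh hRh hRhE

theorem stmt9 {F Fh T O : Type*} [Fintype F] [Fintype Fh] [Fintype T] [Fintype O]
    (Λ : (F → ℝ) →ₗ[ℝ] (T → ℝ)) (E : (F → ℝ) →ₗ[ℝ] (O → ℝ))
    (V : Submodule ℝ (F → ℝ))
    (Λh : (Fh → ℝ) →ₗ[ℝ] (T → ℝ)) (Eh : (Fh → ℝ) →ₗ[ℝ] (O → ℝ))
    (Vh : Submodule ℝ (Fh → ℝ))
    (hcover : ∀ v ∈ V, ∃ vh ∈ Vh, Λh vh = Λ v ∧ Eh vh = E v)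
    (hcomplete : LinearMap.ker Eh ⊓ Vh ≤ LinearMap.ker Λh ⊓ Vh)
    (R : F → ℝ) (hR : R ∈ V) (G : T → ℝ) (GO : O → ℝ)
    (hG : Λ R = G) (hGO : E R = GO) :
    (∀ Rh ∈ Vh, Eh Rh = GO → Λh Rh = G) ∧
    {g : T → ℝ | ∃ Rh ∈ Vh, Eh Rh = GO ∧ g = Λh Rh} = {G} :=
  stmt9_general Λ E V Λh Eh Vh hcover hcomplete R hR G GO hG hGO
end

section
/- Let M = (F, Λ, E, V) be a balanced belief model: Λ and E are row-constant linear maps and V contains all constant functions. Fix R ∈ V, let G = Λ(R) and let σ : ℝ → (0,1) be a bijection with σ(r) + σ(−r) = 1. Define, for R' ∈ ℝ^F, the choice probability P^{R'}(o ≻ o') = σ([E(R')](o) − [E(R')](o')). Then the set {Λ(R') − G : R' ∈ V, P^{R'} = P^{R}} equals Λ(ker(E) ∩ V) + {c·1_T : c ∈ ℝ}, where 1_T is the constant-one function on T. -/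
/-! Equal choice probabilities mean, by injectivity of `σ`, that `E R'` and
`E R` differ by a constant. Since `E` maps constants onto constants, `R' - R` is then an element
of `ker E ∩ V` plus a constant, and `Λ` maps that constant to a constant. Conversely, every
constant in `ℝ^T` is the `Λ`-image of a constant in `V`, and adding elements of `ker E` and
constants to `R` shifts `E R` by a constant, which leaves all differences unchanged. -/

open Finset

/-- A linear map `A : ℝ^X → ℝ^Y` is row-constant if all its row sums equal the
same nonzero constant. -/
def RowConstant {X Y : Type*} [Fintype X] [DecidableEq X]
    (A : (X → ℝ) →ₗ[ℝ] (Y → ℝ)) : Prop :=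
  ∃ c : ℝ, c ≠ 0 ∧ ∀ y : Y, ∑ x, A (Pi.single x 1) y = c

theorem forall_sub_eq_sub_iff {O M : Type*} [AddCommGroup M] (f g : O → M) :
    (∀ o o', f o - f o' = g o - g o') ↔ ∃ k : M, f = g + fun _ => k := by
  constructor
  · intro h
    rcases isEmpty_or_nonempty O with hO | ⟨⟨o₀⟩⟩
    · exact ⟨0, funext isEmptyElim⟩
    · refine ⟨f o₀ - g o₀, funext fun o => ?_⟩
      rw [Pi.add_apply, ← sub_eq_sub_iff_sub_eq_sub.1 (h o o₀), add_sub_cancel]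
  · rintro ⟨k, rfl⟩ o o'
    simp only [Pi.add_apply, add_sub_add_right_eq_sub]

theorem map_const_of_sum_single {R X Y : Type*} [CommSemiring R] [Fintype X] [DecidableEq X]
    (A : (X → R) →ₗ[R] (Y → R)) {c : R} (hc : ∀ y, ∑ x, A (Pi.single x 1) y = c) (d : R) :
    A (fun _ => d) = fun _ => d * c := by
  have hconst : (fun _ : X => d) = d • ∑ x : X, Pi.single x (1 : R) := by
    rw [Finset.univ_sum_single]
    funext x
    simp
  funext y
  simp only [hconst, map_smul, map_sum, Pi.smul_apply, Finset.sum_apply, smul_eq_mul, hc y]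

namespace RowConstant

variable {X Y : Type*} [Fintype X] [DecidableEq X] {A : (X → ℝ) →ₗ[ℝ] (Y → ℝ)}

theorem exists_map_const (hA : RowConstant A) (d : ℝ) :
    ∃ e : ℝ, A (fun _ => d) = fun _ => e := by
  obtain ⟨c, -, hc⟩ := hA
  exact ⟨d * c, map_const_of_sum_single A hc d⟩

theorem exists_map_const_eq (hA : RowConstant A) (e : ℝ) :
    ∃ d : ℝ, A (fun _ => d) = fun _ => e := by
  obtain ⟨c, hc0, hc⟩ := hA
  exact ⟨e / c, by rw [map_const_of_sum_single A hc, div_mul_cancel₀ e hc0]⟩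

end RowConstant

theorem stmt14_general {F T O : Type*} [Fintype F] [DecidableEq F]
    (Λ : (F → ℝ) →ₗ[ℝ] (T → ℝ)) (E : (F → ℝ) →ₗ[ℝ] (O → ℝ))
    (V : Submodule ℝ (F → ℝ))
    (hΛ : RowConstant Λ) (hE : RowConstant E)
    (hV : ∀ c : ℝ, (fun _ : F => c) ∈ V)
    (R : F → ℝ) (hR : R ∈ V) (G : T → ℝ) (hG : Λ R = G)
    (σ : ℝ → ℝ)
    (hσbij : Set.BijOn σ Set.univ (Set.Ioo (0 : ℝ) 1)) :
    {g : T → ℝ | ∃ R' ∈ V,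
        (∀ o o' : O, σ (E R' o - E R' o') = σ (E R o - E R o')) ∧ g = Λ R' - G} =
      {g : T → ℝ | ∃ a ∈ Λ '' ((LinearMap.ker E ⊓ V : Submodule ℝ (F → ℝ)) : Set (F → ℝ)),
        ∃ c : ℝ, g = a + fun _ : T => c} := by
  have hσ : Function.Injective σ := Set.injOn_univ.1 hσbij.injOn
  subst hG
  ext g
  constructor
  · rintro ⟨R', hR', hP, rfl⟩
    obtain ⟨k, hk⟩ := (forall_sub_eq_sub_iff (E R') (E R)).1 fun o o' => hσ (hP o o')
    obtain ⟨d, hd⟩ := hE.exists_map_const_eq k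
    obtain ⟨e, he⟩ := hΛ.exists_map_const d
    have hw : R' - R - (fun _ => d) ∈ LinearMap.ker E ⊓ V :=
      Submodule.mem_inf.2 ⟨LinearMap.mem_ker.2 (by rw [map_sub, map_sub, hk, hd]; abel),
        V.sub_mem (V.sub_mem hR' hR) (hV d)⟩
    refine ⟨_, ⟨_, hw, rfl⟩, e, ?_⟩
    rw [map_sub, map_sub, he]
    abel
  · rintro ⟨_, ⟨w, ⟨hwE, hwV⟩, rfl⟩, c, rfl⟩
    obtain ⟨d, hd⟩ := hΛ.exists_map_const_eq c
    obtain ⟨e, he⟩ := hE.exists_map_const d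
    refine ⟨R + w + fun _ => d, V.add_mem (V.add_mem hR hwV) (hV d), fun o o' => ?_, ?_⟩
    · have hwE : E w = 0 := hwE
      have hshift : E (R + w + fun _ => d) = E R + fun _ => e := by
        rw [map_add, map_add, hwE, he, add_zero]
      rw [(forall_sub_eq_sub_iff _ _).2 ⟨e, hshift⟩]
    · rw [map_add, map_add, hd]
      abel

theorem stmt14 {F T O : Type*} [Fintype F] [Fintype T] [Fintype O] [DecidableEq F]
    (Λ : (F → ℝ) →ₗ[ℝ] (T → ℝ)) (E : (F → ℝ) →ₗ[ℝ] (O → ℝ))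
    (V : Submodule ℝ (F → ℝ))
    (hΛ : RowConstant Λ) (hE : RowConstant E)
    (hV : ∀ c : ℝ, (fun _ : F => c) ∈ V)
    (R : F → ℝ) (hR : R ∈ V) (G : T → ℝ) (hG : Λ R = G)
    (σ : ℝ → ℝ)
    (hσbij : Set.BijOn σ Set.univ (Set.Ioo (0 : ℝ) 1))
    (hσsym : ∀ r : ℝ, σ r + σ (-r) = 1) :
    {g : T → ℝ | ∃ R' ∈ V,
        (∀ o o' : O, σ (E R' o - E R' o') = σ (E R o - E R o')) ∧ g = Λ R' - G} =
      {g : T → ℝ | ∃ a ∈ Λ '' ((LinearMap.ker E ⊓ V : Submodule ℝ (F → ℝ)) : Set (F → ℝ)),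
        ∃ c : ℝ, g = a + fun _ : T => c} :=
  stmt14_general Λ E V hΛ hE hV R hR G hG σ hσbij
end
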